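/- Let A be an algebraic curvature tensor on a Euclidean 4-space, diagonalized by an orthonormal basis e₁,...,e₄ (i.e. A(e_i, e_j, e_k, e_l) = 0 whenever {i,j} ≠ {k,l}), and suppose its Ricci contraction vanishes. Set σ_ij = A(e_i, e_j, e_i, e_j). Then for any {i,j,k,l} = {1,2,3,4}: σ_ij = σ_kl, and each bivector e_i∧e_j ± e_k∧e_l is an eigenvector of the induced endomorphism A : Λ²T → Λ²T with eigenvalue σ_ij. -/
import Mathlib

/-- Sum over `Fin 4` of a function, when we have four distinct indices. -/
lemma sum_four_distinct {M : Type*} [AddCommMonoid M] (f : Fin 4 → M)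
    {i j k l : Fin 4} (hij : i ≠ j) (hik : i ≠ k) (hil : i ≠ l)
    (hjk : j ≠ k) (hjl : j ≠ l) (hkl : k ≠ l) :
    ∑ m, f m = f i + f j + f k + f l := by
  have huniv : (Finset.univ : Finset (Fin 4)) = {i, j, k, l} := by
    symm
    apply Finset.eq_univ_of_card
    rw [Finset.card_insert_of_notMem (by simp [hij, hik, hil]),
      Finset.card_insert_of_notMem (by simp [hjk, hjl]),
      Finset.card_insert_of_notMem (by simp [hkl]), Finset.card_singleton]
    rfl
  rw [huniv, Finset.sum_insert (by simp [hij, hik, hil]),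
    Finset.sum_insert (by simp [hjk, hjl]),
    Finset.sum_insert (by simp [hkl]), Finset.sum_singleton]
  abel

/-- Let `A` be an algebraic curvature tensor on a Euclidean 4-space
(components `A i j k l` in an orthonormal basis `e`, with the curvature symmetries and
vanishing Ricci contraction), diagonalized by the basis
(`A i j k l = 0` whenever `{i,j} ≠ {k,l}`).  Set `σ_ij = A i j i j`.  Then for any
`{i,j,k,l} = {1,2,3,4}`: `σ_ij = σ_kl`, and each bivector `e_i∧e_j ± e_k∧e_l` is an
eigenvector of the induced endomorphism `Ahat` of the bivector space with eigenvalue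
`σ_ij`.  The bivector space is modelled by an ℝ-module `Λ` with alternating wedge `w`,
and `Ahat` is the endomorphism determined by `A(v∧w) = A(v,w,·,·)` via the inner
product, i.e. `Ahat (e_i∧e_j) = ∑_{k<l} A i j k l • e_k∧e_l`. -/
theorem diagonalized_weyl_eigenvectors
    {V : Type*} [NormedAddCommGroup V] [InnerProductSpace ℝ V]
    (e : Fin 4 → V) (he : Orthonormal ℝ e)
    {Λ : Type*} [AddCommGroup Λ] [Module ℝ Λ]
    (w : V →ₗ[ℝ] V →ₗ[ℝ] Λ)
    (halt : ∀ v : V, w v v = 0)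
    (A : Fin 4 → Fin 4 → Fin 4 → Fin 4 → ℝ)
    (hskew1 : ∀ i j k l, A i j k l = -A j i k l)
    (hskew2 : ∀ i j k l, A i j k l = -A i j l k)
    (hpairsym : ∀ i j k l, A i j k l = A k l i j)
    (hbianchi : ∀ i j k l, A i j k l + A j k i l + A k i j l = 0)
    (hricci : ∀ i l, (∑ k, A k i k l) = 0)
    (hdiag : ∀ i j k l : Fin 4, ({i, j} : Finset (Fin 4)) ≠ {k, l} → A i j k l = 0)
    (Ahat : Λ →ₗ[ℝ] Λ)
    (hAhat : ∀ i j, Ahat (w (e i) (e j)) =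
      ∑ k, ∑ l, (if k < l then A i j k l else 0) • w (e k) (e l)) :
    ∀ i j k l : Fin 4, i ≠ j → i ≠ k → i ≠ l → j ≠ k → j ≠ l → k ≠ l →
      A i j i j = A k l k l ∧
      Ahat (w (e i) (e j) + w (e k) (e l)) = A i j i j • (w (e i) (e j) + w (e k) (e l)) ∧
      Ahat (w (e i) (e j) - w (e k) (e l)) = A i j i j • (w (e i) (e j) - w (e k) (e l)) := by
  classical
  -- wedge is antisymmetric
  have hw : ∀ a b : V, w a b = - w b a := by
    intro a b
    have h := halt (a + b)
    simp only [map_add, LinearMap.add_apply, halt, add_zero, zero_add] at h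
    exact eq_neg_of_add_eq_zero_right h
  -- A vanishes with repeated first pair
  have hzero : ∀ a b c : Fin 4, A a a b c = 0 := by
    intro a b c
    have := hskew1 a a b c
    linarith
  -- symmetry of σ
  have hsig : ∀ a b : Fin 4, A b a b a = A a b a b := by
    intro a b
    rw [hskew1 b a b a, hskew2 a b b a]
    ring
  -- Ricci consequence: σ_ab + σ_ac + σ_ad = 0 for {a,b,c,d} distinct
  have key : ∀ a b c d : Fin 4, a ≠ b → a ≠ c → a ≠ d → b ≠ c → b ≠ d → c ≠ d →
      A b a b a + A c a c a + A d a d a = 0 := by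
    intro a b c d hab hac had hbc hbd hcd
    have h := hricci a a
    rw [sum_four_distinct (fun m => A m a m a) hab hac had hbc hbd hcd] at h
    have h0 := hzero a a a
    linarith
  -- the key eigen-computation
  have heig : ∀ i j : Fin 4, i ≠ j → Ahat (w (e i) (e j)) = A i j i j • w (e i) (e j) := by
    intro i j hij
    rw [hAhat]
    have houter : ∀ k : Fin 4, k ≠ i → k ≠ j →
        (∑ l, (if k < l then A i j k l else 0) • w (e k) (e l)) = 0 := by
      intro k hki hkj
      apply Finset.sum_eq_zero
      intro l _
      have hA : A i j k l = 0 := by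
        apply hdiag
        intro h
        have hk : k ∈ ({i, j} : Finset (Fin 4)) := by rw [h]; simp
        simp only [Finset.mem_insert, Finset.mem_singleton] at hk
        rcases hk with h' | h' <;> [exact hki h'; exact hkj h']
      simp [hA]
    have hsub : (∑ k, ∑ l, (if k < l then A i j k l else 0) • w (e k) (e l))
        = ∑ k ∈ ({i, j} : Finset (Fin 4)), ∑ l, (if k < l then A i j k l else 0) • w (e k) (e l) := by
      refine (Finset.sum_subset (Finset.subset_univ _) ?_).symm
      intro k _ hk
      simp only [Finset.mem_insert, Finset.mem_singleton, not_or] at hk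
      exact houter k hk.1 hk.2
    rw [hsub, Finset.sum_pair hij]
    have hinner1 : (∑ l, (if i < l then A i j i l else 0) • w (e i) (e l))
        = (if i < j then A i j i j else 0) • w (e i) (e j) := by
      apply Finset.sum_eq_single
      · intro l _ hlj
        have hA : A i j i l = 0 := by
          apply hdiag
          intro h
          have hjm : j ∈ ({i, l} : Finset (Fin 4)) := by rw [← h]; simp
          simp only [Finset.mem_insert, Finset.mem_singleton] at hjm
          rcases hjm with h' | h' <;> [exact hij h'.symm; exact hlj h'.symm]
        simp [hA]
      · intro h
        exact absurd (Finset.mem_univ j) h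
    have hinner2 : (∑ l, (if j < l then A i j j l else 0) • w (e j) (e l))
        = (if j < i then A i j j i else 0) • w (e j) (e i) := by
      apply Finset.sum_eq_single
      · intro l _ hli
        have hA : A i j j l = 0 := by
          apply hdiag
          intro h
          have him : i ∈ ({j, l} : Finset (Fin 4)) := by rw [← h]; simp
          simp only [Finset.mem_insert, Finset.mem_singleton] at him
          rcases him with h' | h' <;> [exact hij h'; exact hli h'.symm]
        simp [hA]
      · intro h
        exact absurd (Finset.mem_univ i) h
    rw [hinner1, hinner2]
    rcases hij.lt_or_gt with h | h
    · rw [if_pos h, if_neg h.asymm, zero_smul, add_zero]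
    · rw [if_neg h.asymm, if_pos h, zero_smul, zero_add, hw (e j) (e i),
        hskew2 i j j i]
      simp
  intro i j k l hij hik hil hjk hjl hkl
  have hs : A i j i j = A k l k l := by
    have Ei := key i j k l hij hik hil hjk hjl hkl
    have Ej := key j i k l hij.symm hjk hjl hik hil hkl
    have Ek := key k i j l hik.symm hjk.symm hkl hij hil hjl
    have El := key l i j k hil.symm hjl.symm hkl.symm hij hik hjk
    have s1 := hsig i j
    have s2 := hsig i k
    have s3 := hsig i l
    have s4 := hsig j k
    have s5 := hsig j l
    have s6 := hsig k l
    linarith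
  refine ⟨hs, ?_, ?_⟩
  · rw [map_add, heig i j hij, heig k l hkl, ← hs, smul_add]
  · rw [map_sub, heig i j hij, heig k l hkl, ← hs, smul_sub]
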